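/- Let U, V : [0, R] → ℝ be C² functions with U'(0) = V'(0) = 0, U(R) = V(R) = 0, satisfying −(r^{N-1} U'(r))' = r^{N-1} V(r)^{2/(N-2)} and −(r^{N-1} V'(r))' = r^{N-1} F(r) on (0,R), where F ≥ 0 is continuous and N > 2. If ω_{N-1} ∫_0^R F(r) r^{N-1} dr = ‖F‖₁, then for all r ∈ (0,R]: −U'(r) ≤ (1/((N-2)^{N/(N-2)} ω_{N-1}^{2/(N-2)})) · (1/r) · ‖F‖₁^{2/(N-2)}. -/

import Mathlib

open MeasureTheory intervalIntegral

set_option maxHeartbeats 1000000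

theorem radial_gradient_estimate (N : ℕ) (hN : 2 < N) (R : ℝ) (hR : 0 < R)
    (U V F : ℝ → ℝ)
    (hU : ContDiffOn ℝ 2 U (Set.Icc 0 R)) (hV : ContDiffOn ℝ 2 V (Set.Icc 0 R))
    (hU'0 : deriv U 0 = 0) (hV'0 : deriv V 0 = 0)
    (hUR : U R = 0) (hVR : V R = 0)
    (hF : ContinuousOn F (Set.Icc 0 R)) (hFpos : ∀ r ∈ Set.Icc 0 R, 0 ≤ F r)
    (heqU : ∀ r ∈ Set.Ioo 0 R,
      deriv (fun s => s ^ (N - 1) * deriv U s) r = -(r ^ (N - 1) * (V r) ^ (2 / ((N : ℝ) - 2))))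
    (heqV : ∀ r ∈ Set.Ioo 0 R,
      deriv (fun s => s ^ (N - 1) * deriv V s) r = -(r ^ (N - 1) * F r))
    (ω : ℝ)
    (hω : ω = (N : ℝ) * (volume (Metric.ball (0 : EuclideanSpace ℝ (Fin N)) 1)).toReal)
    (F1 : ℝ) (hF1 : F1 = ω * ∫ r in (0 : ℝ)..R, F r * r ^ (N - 1)) :
    ∀ r ∈ Set.Ioc (0 : ℝ) R,
      -deriv U r ≤
        (1 / (((N : ℝ) - 2) ^ ((N : ℝ) / ((N : ℝ) - 2)) * ω ^ (2 / ((N : ℝ) - 2)))) *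
          (1 / r) * F1 ^ (2 / ((N : ℝ) - 2)) := by
  have hN3 : 3 ≤ N := hN
  have hN2 : (2 : ℝ) < (N : ℝ) := by exact_mod_cast hN
  have hNsub : (0 : ℝ) < (N : ℝ) - 2 := by linarith
  set p : ℝ := 2 / ((N : ℝ) - 2) with hpdef
  have hppos : 0 < p := by positivity
  -- ω > 0
  have hωpos : 0 < ω := by
    rw [hω]
    have h1 : 0 < volume (Metric.ball (0 : EuclideanSpace ℝ (Fin N)) 1) :=
      Metric.measure_ball_pos _ _ one_pos
    have h2 : volume (Metric.ball (0 : EuclideanSpace ℝ (Fin N)) 1) < ⊤ :=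
      measure_ball_lt_top
    have h3 : 0 < (volume (Metric.ball (0 : EuclideanSpace ℝ (Fin N)) 1)).toReal :=
      ENNReal.toReal_pos h1.ne' h2.ne
    have hN0 : (0 : ℝ) < (N : ℝ) := by positivity
    exact mul_pos hN0 h3
  have hIooIcc : Set.Ioo (0 : ℝ) R ⊆ Set.Icc 0 R := Set.Ioo_subset_Icc_self
  have hUD : UniqueDiffOn ℝ (Set.Icc (0 : ℝ) R) := uniqueDiffOn_Icc hR
  set DU := derivWithin U (Set.Icc (0 : ℝ) R) with hDUdef
  set DV := derivWithin V (Set.Icc (0 : ℝ) R) with hDVdef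
  have hDVcont : ContinuousOn DV (Set.Icc 0 R) :=
    hV.continuousOn_derivWithin hUD (by norm_num)
  have hUcont : ContinuousOn U (Set.Icc 0 R) := hU.continuousOn
  have hVcont : ContinuousOn V (Set.Icc 0 R) := hV.continuousOn
  -- interior differentiability and identification of deriv with derivWithin
  have key : ∀ (W : ℝ → ℝ), ContDiffOn ℝ 2 W (Set.Icc 0 R) → ∀ x ∈ Set.Ioo (0 : ℝ) R,
      DifferentiableAt ℝ W x ∧ deriv W x = derivWithin W (Set.Icc 0 R) x := by
    intro W hW x hx
    have hmem : Set.Icc (0 : ℝ) R ∈ nhds x := Icc_mem_nhds hx.1 hx.2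
    have hd : DifferentiableAt ℝ W x :=
      (hW.contDiffAt hmem).differentiableAt (by norm_num)
    exact ⟨hd, (hd.derivWithin (hUD x (hIooIcc hx))).symm⟩
  -- the basic FTC identity
  have FTC : ∀ (W G : ℝ → ℝ), ContDiffOn ℝ 2 W (Set.Icc 0 R) →
      ContinuousOn G (Set.Icc 0 R) →
      (∀ x ∈ Set.Ioo (0 : ℝ) R,
        deriv (fun s => s ^ (N - 1) * deriv W s) x = -(x ^ (N - 1) * G x)) →
      ∀ r ∈ Set.Ioc (0 : ℝ) R,
        r ^ (N - 1) * derivWithin W (Set.Icc 0 R) r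
          = -(∫ s in (0 : ℝ)..r, s ^ (N - 1) * G s) := by
    intro W G hW hG heq r hr
    set DW := derivWithin W (Set.Icc (0 : ℝ) R) with hDW
    have hsub : Set.Icc (0 : ℝ) r ⊆ Set.Icc 0 R := Set.Icc_subset_Icc le_rfl hr.2
    have hDWc : ContinuousOn DW (Set.Icc 0 R) := hW.continuousOn_derivWithin hUD (by norm_num)
    have hcont : ContinuousOn (fun s => s ^ (N - 1) * DW s) (Set.Icc 0 r) :=
      (continuousOn_pow _).mul (hDWc.mono hsub)
    have hderiv : ∀ x ∈ Set.Ioo (0 : ℝ) r, HasDerivAt (fun s => s ^ (N - 1) * DW s)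
        (-(x ^ (N - 1) * G x)) x := by
      intro x hx
      have hx' : x ∈ Set.Ioo (0 : ℝ) R := ⟨hx.1, lt_of_lt_of_le hx.2 hr.2⟩
      have hWIoo : ContDiffOn ℝ 2 W (Set.Ioo 0 R) := hW.mono hIooIcc
      have hdW : ContDiffOn ℝ 1 (deriv W) (Set.Ioo 0 R) :=
        hWIoo.deriv_of_isOpen isOpen_Ioo (by norm_num)
      have hdWx : DifferentiableAt ℝ (deriv W) x :=
        (hdW.differentiableOn (by norm_num) x hx').differentiableAt
          (isOpen_Ioo.mem_nhds hx')
      have hgd : DifferentiableAt ℝ (fun s => s ^ (N - 1) * deriv W s) x :=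
        (differentiableAt_pow _).mul hdWx
      have hg : HasDerivAt (fun s => s ^ (N - 1) * deriv W s) (-(x ^ (N - 1) * G x)) x := by
        have h := hgd.hasDerivAt
        rwa [heq x hx'] at h
      apply hg.congr_of_eventuallyEq
      filter_upwards [isOpen_Ioo.mem_nhds hx'] with s hs
      simp only [hDW, ← (key W hW s hs).2]
    have hint : IntervalIntegrable (fun s => -(s ^ (N - 1) * G s)) volume 0 r := by
      apply ContinuousOn.intervalIntegrable
      rw [Set.uIcc_of_le hr.1.le]
      exact ((continuousOn_pow _).mul (hG.mono hsub)).neg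
    have hFTC := intervalIntegral.integral_eq_sub_of_hasDerivAt_of_le hr.1.le hcont hderiv hint
    have h0 : (0 : ℝ) ^ (N - 1) * DW 0 = 0 := by
      rw [zero_pow (by omega : N - 1 ≠ 0), zero_mul]
    have h1 : -(∫ s in (0 : ℝ)..r, s ^ (N - 1) * G s) = r ^ (N - 1) * DW r := by
      simpa [intervalIntegral.integral_neg, h0] using hFTC
    exact h1.symm
  have hVp_cont : ContinuousOn (fun s => V s ^ p) (Set.Icc 0 R) :=
    hVcont.rpow_const (fun x _ => Or.inr hppos.le)
  have claimV := FTC V F hV hF heqV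
  have claimU := FTC U (fun s => V s ^ p) hU hVp_cont heqU
  -- integrals of F
  have hcontsF : ContinuousOn (fun s => s ^ (N - 1) * F s) (Set.Icc 0 R) :=
    (continuousOn_pow _).mul hF
  have hintF : ∀ a b : ℝ, 0 ≤ a → b ≤ R → a ≤ b →
      IntervalIntegrable (fun s => s ^ (N - 1) * F s) volume a b := by
    intro a b ha hb hab
    apply ContinuousOn.intervalIntegrable
    apply hcontsF.mono
    rw [Set.uIcc_of_le hab]
    exact Set.Icc_subset_Icc ha hb
  have hIeq : (∫ s in (0 : ℝ)..R, s ^ (N - 1) * F s) = ∫ s in (0 : ℝ)..R, F s * s ^ (N - 1) :=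
    intervalIntegral.integral_congr (fun s _ => mul_comm _ _)
  have hωF : (∫ s in (0 : ℝ)..R, s ^ (N - 1) * F s) = F1 / ω := by
    rw [hIeq, hF1]
    field_simp
  have hGnonneg : ∀ r ∈ Set.Ioc (0 : ℝ) R, 0 ≤ ∫ s in (0 : ℝ)..r, s ^ (N - 1) * F s := by
    intro r hr
    apply intervalIntegral.integral_nonneg hr.1.le
    intro s hs
    exact mul_nonneg (pow_nonneg hs.1 _) (hFpos s ⟨hs.1, le_trans hs.2 hr.2⟩)
  have hGle : ∀ r ∈ Set.Ioc (0 : ℝ) R,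
      (∫ s in (0 : ℝ)..r, s ^ (N - 1) * F s) ≤ F1 / ω := by
    intro r hr
    rw [← hωF, ← intervalIntegral.integral_add_adjacent_intervals
      (hintF 0 r le_rfl hr.2 hr.1.le) (hintF r R hr.1.le le_rfl hr.2)]
    have h2 : 0 ≤ ∫ s in r..R, s ^ (N - 1) * F s := by
      apply intervalIntegral.integral_nonneg hr.2
      intro s hs
      exact mul_nonneg (pow_nonneg (le_trans hr.1.le hs.1) _)
        (hFpos s ⟨le_trans hr.1.le hs.1, hs.2⟩)
    linarith
  have hF1nonneg : 0 ≤ F1 := by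
    have h := hGnonneg R ⟨hR, le_rfl⟩
    rw [hωF] at h
    have h2 := mul_nonneg h hωpos.le
    rwa [div_mul_cancel₀ _ hωpos.ne'] at h2
  set c : ℝ := F1 / ω with hcdef
  have hcnonneg : 0 ≤ c := div_nonneg hF1nonneg hωpos.le
  -- bound on -DV
  have hDVle : ∀ r ∈ Set.Ioc (0 : ℝ) R, -DV r ≤ c * (r ^ (N - 1))⁻¹ := by
    intro r hr
    have h := claimV r hr
    have hrp : (0 : ℝ) < r ^ (N - 1) := pow_pos hr.1 _
    have hDV : -DV r = (∫ s in (0 : ℝ)..r, s ^ (N - 1) * F s) / r ^ (N - 1) := by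
      rw [eq_div_iff hrp.ne']
      linear_combination -h
    rw [hDV, div_eq_mul_inv]
    exact mul_le_mul_of_nonneg_right (hGle r hr) (inv_nonneg.mpr hrp.le)
  have hDVnonpos : ∀ r ∈ Set.Ioc (0 : ℝ) R, DV r ≤ 0 := by
    intro r hr
    have h := claimV r hr
    have hrp : (0 : ℝ) < r ^ (N - 1) := pow_pos hr.1 _
    nlinarith [hGnonneg r hr]
  -- V is nonnegative
  have hVanti : AntitoneOn V (Set.Icc 0 R) := by
    apply antitoneOn_of_deriv_nonpos (convex_Icc 0 R) hVcont
    · intro x hx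
      rw [interior_Icc] at hx
      exact ((key V hV x hx).1.differentiableWithinAt)
    · intro x hx
      rw [interior_Icc] at hx
      rw [(key V hV x hx).2]
      exact hDVnonpos x ⟨hx.1, hx.2.le⟩
  have hVnonneg : ∀ s ∈ Set.Icc (0 : ℝ) R, 0 ≤ V s := by
    intro s hs
    have h := hVanti hs (Set.right_mem_Icc.mpr hR.le) hs.2
    rwa [hVR] at h
  -- bound on V
  have hVbound : ∀ r ∈ Set.Ioc (0 : ℝ) R,
      V r ≤ c / ((N : ℝ) - 2) * r ^ ((2 : ℤ) - N) := by
    intro r hr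
    have hVder : ∀ x ∈ Set.Ioo r R, HasDerivAt V (DV x) x := by
      intro x hx
      have hx' : x ∈ Set.Ioo (0 : ℝ) R := ⟨lt_trans hr.1 hx.1, hx.2⟩
      have h := (key V hV x hx').1.hasDerivAt
      rwa [(key V hV x hx').2] at h
    have hsub : Set.Icc r R ⊆ Set.Icc (0 : ℝ) R := Set.Icc_subset_Icc hr.1.le le_rfl
    have hintDV : IntervalIntegrable DV volume r R := by
      apply ContinuousOn.intervalIntegrable
      apply hDVcont.mono
      rw [Set.uIcc_of_le hr.2]
      exact hsub
    have hFTC := intervalIntegral.integral_eq_sub_of_hasDerivAt_of_le hr.2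
      (hVcont.mono hsub) hVder hintDV
    rw [hVR] at hFTC
    have hVr : V r = ∫ s in r..R, -DV s := by
      rw [intervalIntegral.integral_neg, hFTC]
      ring
    have hintz : IntervalIntegrable (fun s : ℝ => c * s ^ ((1 : ℤ) - N)) volume r R := by
      apply ContinuousOn.intervalIntegrable
      apply ContinuousOn.mul continuousOn_const
      intro x hx
      have hx0 : x ≠ 0 := by
        rw [Set.uIcc_of_le hr.2] at hx
        exact (lt_of_lt_of_le hr.1 hx.1).ne'
      exact (continuousAt_zpow₀ x _ (Or.inl hx0)).continuousWithinAt
    have hmono : (∫ s in r..R, -DV s) ≤ ∫ s in r..R, c * s ^ ((1 : ℤ) - N) := by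
      apply intervalIntegral.integral_mono_on hr.2 hintDV.neg hintz
      intro x hx
      have hx' : x ∈ Set.Ioc (0 : ℝ) R := ⟨lt_of_lt_of_le hr.1 hx.1, hx.2⟩
      have h1 := hDVle x hx'
      have hzx : (x : ℝ) ^ ((1 : ℤ) - N) = (x ^ (N - 1))⁻¹ := by
        rw [show (1 : ℤ) - N = -((N - 1 : ℕ) : ℤ) by
          push_cast [Nat.cast_sub (by omega : 1 ≤ N)]; ring, zpow_neg, zpow_natCast]
      rw [hzx]
      exact h1
    have hzint : (∫ s in r..R, (s : ℝ) ^ ((1 : ℤ) - N))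
        = (R ^ ((2 : ℤ) - N) - r ^ ((2 : ℤ) - N)) / ((2 : ℝ) - N) := by
      rw [integral_zpow]
      · rw [show (1 : ℤ) - N + 1 = 2 - N by ring]
        push_cast
        ring
      · right
        refine ⟨by omega, ?_⟩
        rw [Set.uIcc_of_le hr.2]
        intro hmem
        exact absurd hmem.1 (not_le.mpr hr.1)
    have hRp : (0 : ℝ) < R ^ ((2 : ℤ) - N) := zpow_pos hR _
    calc V r = ∫ s in r..R, -DV s := hVr
      _ ≤ ∫ s in r..R, c * s ^ ((1 : ℤ) - N) := hmono
      _ = c * ((R ^ ((2 : ℤ) - N) - r ^ ((2 : ℤ) - N)) / ((2 : ℝ) - N)) := by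
          rw [intervalIntegral.integral_const_mul, hzint]
      _ = c * ((r ^ ((2 : ℤ) - N) - R ^ ((2 : ℤ) - N)) / ((N : ℝ) - 2)) := by
          have hne : ((2 : ℝ) - N) ≠ 0 := by
            intro hcon; rw [sub_eq_zero] at hcon; linarith
          have heq2 : (R ^ ((2 : ℤ) - N) - r ^ ((2 : ℤ) - N)) / ((2 : ℝ) - N)
              = (r ^ ((2 : ℤ) - N) - R ^ ((2 : ℤ) - N)) / ((N : ℝ) - 2) := by
            rw [div_eq_div_iff hne hNsub.ne']
            ring
          rw [heq2]
      _ ≤ c * (r ^ ((2 : ℤ) - N) / ((N : ℝ) - 2)) := by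
          gcongr
          linarith
      _ = c / ((N : ℝ) - 2) * r ^ ((2 : ℤ) - N) := by ring
  set K : ℝ := c / ((N : ℝ) - 2) with hKdef
  have hKnonneg : 0 ≤ K := div_nonneg hcnonneg hNsub.le
  -- main bound for -DU
  have main : ∀ r ∈ Set.Ioc (0 : ℝ) R, -DU r ≤ K ^ p / (((N : ℝ) - 2) * r) := by
    intro r hr
    have h := claimU r hr
    have hrp : (0 : ℝ) < r ^ (N - 1) := pow_pos hr.1 _
    have hKpn : (0 : ℝ) ≤ K ^ p := Real.rpow_nonneg hKnonneg _
    have hptw : ∀ s ∈ Set.Icc (0 : ℝ) r,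
        s ^ (N - 1) * V s ^ p ≤ K ^ p * s ^ (N - 3) := by
      intro s hs
      rcases eq_or_lt_of_le hs.1 with h0 | hspos
      · rw [← h0, zero_pow (by omega : N - 1 ≠ 0), zero_mul]
        positivity
      · have hsIoc : s ∈ Set.Ioc (0 : ℝ) R := ⟨hspos, le_trans hs.2 hr.2⟩
        have hV1 : V s ≤ K * s ^ ((2 : ℤ) - N) := hVbound s hsIoc
        have hV0 : 0 ≤ V s := hVnonneg s ⟨hs.1, hsIoc.2⟩
        have hsz : (0 : ℝ) < s ^ ((2 : ℤ) - N) := zpow_pos hspos _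
        have hb : V s ^ p ≤ (K * s ^ ((2 : ℤ) - N)) ^ p :=
          Real.rpow_le_rpow hV0 hV1 hppos.le
        have hKp : (K * s ^ ((2 : ℤ) - N)) ^ p = K ^ p * (s ^ ((2 : ℤ) - N)) ^ p :=
          Real.mul_rpow hKnonneg hsz.le
        have h2 : ((s : ℝ) ^ ((2 : ℤ) - N)) ^ p = s ^ ((-2 : ℝ)) := by
          rw [← Real.rpow_intCast s ((2 : ℤ) - N), ← Real.rpow_mul hspos.le]
          congr 1
          push_cast
          rw [hpdef]
          field_simp
          ring
        calc s ^ (N - 1) * V s ^ p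
            ≤ s ^ (N - 1) * (K ^ p * s ^ ((-2 : ℝ))) := by
              rw [← h2, ← hKp]
              exact mul_le_mul_of_nonneg_left hb (pow_nonneg hspos.le _)
          _ = K ^ p * s ^ (N - 3) := by
              rw [show (s : ℝ) ^ (N - 1) = s ^ (((N - 1 : ℕ)) : ℝ)
                    from (Real.rpow_natCast s (N - 1)).symm,
                  show (s : ℝ) ^ (N - 3) = s ^ (((N - 3 : ℕ)) : ℝ)
                    from (Real.rpow_natCast s (N - 3)).symm]
              rw [mul_comm (s ^ (((N - 1 : ℕ)) : ℝ)) _, mul_assoc, ← Real.rpow_add hspos]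
              congr 2
              rw [Nat.cast_sub (by omega : 1 ≤ N), Nat.cast_sub (by omega : 3 ≤ N)]
              push_cast
              ring
    have hsubr : Set.Icc (0 : ℝ) r ⊆ Set.Icc 0 R := Set.Icc_subset_Icc le_rfl hr.2
    have hint1 : IntervalIntegrable (fun s => s ^ (N - 1) * V s ^ p) volume 0 r := by
      apply ContinuousOn.intervalIntegrable
      rw [Set.uIcc_of_le hr.1.le]
      exact (continuousOn_pow _).mul (hVp_cont.mono hsubr)
    have hint2 : IntervalIntegrable (fun s : ℝ => K ^ p * s ^ (N - 3)) volume 0 r :=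
      ((continuous_const.mul (continuous_pow _)).intervalIntegrable 0 r)
    have hIle := intervalIntegral.integral_mono_on hr.1.le hint1 hint2 hptw
    have hIval : (∫ s in (0 : ℝ)..r, K ^ p * s ^ (N - 3))
        = K ^ p * (r ^ (N - 2) / ((N : ℝ) - 2)) := by
      rw [intervalIntegral.integral_const_mul, integral_pow,
        zero_pow (by omega : N - 3 + 1 ≠ 0), show N - 3 + 1 = N - 2 by omega, sub_zero]
      congr 1
      rw [Nat.cast_sub (by omega : 3 ≤ N)]
      push_cast
      ring
    have hDUr : -DU r = (∫ s in (0 : ℝ)..r, s ^ (N - 1) * V s ^ p) / r ^ (N - 1) := by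
      rw [eq_div_iff hrp.ne']
      linear_combination -h
    rw [hDUr]
    calc (∫ s in (0 : ℝ)..r, s ^ (N - 1) * V s ^ p) / r ^ (N - 1)
        ≤ (∫ s in (0 : ℝ)..r, K ^ p * s ^ (N - 3)) / r ^ (N - 1) :=
          (div_le_div_iff_of_pos_right hrp).mpr hIle
      _ = K ^ p * (r ^ (N - 2) / ((N : ℝ) - 2)) / r ^ (N - 1) := by rw [hIval]
      _ = K ^ p / (((N : ℝ) - 2) * r) := by
          rw [show r ^ (N - 1) = r ^ (N - 2) * r by
            rw [← pow_succ]; congr 1; omega]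
          have hrn2 : (0 : ℝ) < r ^ (N - 2) := pow_pos hr.1 _
          rw [mul_div_assoc', div_div,
            div_eq_div_iff (mul_ne_zero hNsub.ne' (mul_pos hrn2 hr.1).ne')
              (mul_ne_zero hNsub.ne' hr.1.ne')]
          ring
  -- final algebraic identification
  have halg : ∀ r : ℝ, 0 < r → K ^ p / (((N : ℝ) - 2) * r)
      = 1 / (((N : ℝ) - 2) ^ ((N : ℝ) / ((N : ℝ) - 2)) * ω ^ p) * (1 / r) * F1 ^ p := by
    intro r hrpos
    have hKeq : K = F1 / (ω * ((N : ℝ) - 2)) := by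
      rw [hKdef, hcdef, div_div]
    have hNN : ((N : ℝ) - 2) ^ ((N : ℝ) / ((N : ℝ) - 2)) = ((N : ℝ) - 2) ^ p * ((N : ℝ) - 2) := by
      rw [← Real.rpow_add_one hNsub.ne']
      congr 1
      rw [hpdef]
      field_simp
      ring
    rw [hKeq, Real.div_rpow hF1nonneg (by positivity), Real.mul_rpow hωpos.le hNsub.le, hNN]
    have hA : (0 : ℝ) < ((N : ℝ) - 2) ^ p := Real.rpow_pos_of_pos hNsub _
    have hB : (0 : ℝ) < ω ^ p := Real.rpow_pos_of_pos hωpos _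
    clear_value p
    generalize ((N : ℝ) - 2) = M
    ring
  intro r hr
  have hbound := main r hr
  rw [halg r hr.1] at hbound
  rcases lt_or_eq_of_le hr.2 with hlt | heqr
  · have hk := (key U hU r ⟨hr.1, hlt⟩).2
    rw [hk]
    exact hbound
  · by_cases hdiff : DifferentiableAt ℝ U r
    · have hkk : deriv U r = DU r := by
        rw [hDUdef]
        exact (hdiff.derivWithin (hUD r (by rw [heqr]; exact Set.right_mem_Icc.mpr hR.le))).symm
      rw [hkk]
      exact hbound
    · rw [deriv_zero_of_not_differentiableAt hdiff, neg_zero]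
      have h1 : (0 : ℝ) < ((N : ℝ) - 2) ^ ((N : ℝ) / ((N : ℝ) - 2)) :=
        Real.rpow_pos_of_pos hNsub _
      have h2 : (0 : ℝ) < ω ^ p := Real.rpow_pos_of_pos hωpos _
      have h3 : (0 : ℝ) ≤ F1 ^ p := Real.rpow_nonneg hF1nonneg _
      have h4 : (0 : ℝ) < r := hr.1
      positivity
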